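/- In binary classification with B_h = {h, 1−h}: for every distribution D on X × {0,1}, every hypothesis h, and all n, m with m ≥ n, LG_m(h) ≤ LG_n(h); i.e., the expected population loss of the randomized ERM over {h, 1−h} is non-increasing in the sample size. -/

import Mathlib

open MeasureTheory Finset Filter

noncomputable section

set_option linter.unusedSectionVars false

variable {X : Type*} [MeasurableSpace X] {k : ℕ}

/-- Population (true) loss of hypothesis `h` under distribution `D`. -/
def errD (D : Measure (X × Fin k)) (h : X → Fin k) : ℝ :=
  (D {p | h p.1 ≠ p.2}).toReal

/-- Empirical loss of `h` on the sample `S`. -/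
def errS {n : ℕ} (S : Fin n → X × Fin k) (h : X → Fin k) : ℝ :=
  ((Finset.univ.filter fun i => h (S i).1 ≠ (S i).2).card : ℝ) / n

/-- Expected value of `φ` under the PMF `μ`. -/
def pmfExp {H : Type*} (μ : PMF H) (φ : H → ℝ) : ℝ := ∑' f, (μ f).toReal * φ f

open scoped Classical in
/-- The set of empirical risk minimizers in `B` with respect to the sample `S`. -/
def ermSet {n : ℕ} (B : Finset (X → Fin k)) (S : Fin n → X × Fin k) :
    Finset (X → Fin k) :=
  B.filter fun f => ∀ g ∈ B, errS S f ≤ errS S g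

theorem ermSet_nonempty {n : ℕ} (B : Finset (X → Fin k)) (hB : B.Nonempty)
    (S : Fin n → X × Fin k) : (ermSet B S).Nonempty := by
  classical
  obtain ⟨f, hf, hmin⟩ := Finset.exists_min_image B (errS S) hB
  refine ⟨f, ?_⟩
  simp only [ermSet, Finset.mem_filter]
  exact ⟨hf, hmin⟩

/-- The randomized ERM `G(h,S)`: a uniformly random empirical risk minimizer in `B`.
(On the empty sample all empirical losses are `0`, so this is uniform on `B`.) -/
def ermPMF {n : ℕ} (B : Finset (X → Fin k)) (hB : B.Nonempty)
    (S : Fin n → X × Fin k) : PMF (X → Fin k) :=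
  PMF.uniformOfFinset (ermSet B S) (ermSet_nonempty B hB S)

/-- `LG D B hB n = E_{S ∼ D^n} E[Err_D (G(h,S))]`: the expected population loss of the
randomized ERM over `B` trained on `n` i.i.d. examples from `D`. -/
def LG (D : Measure (X × Fin k)) (B : Finset (X → Fin k)) (hB : B.Nonempty) (n : ℕ) : ℝ :=
  ∫ S, pmfExp (ermPMF B hB S) (errD D) ∂(Measure.pi fun _ : Fin n => D)


open scoped Classical in
/-- The binary base class `B_h = {h, 1 - h}` consisting of `h` and its pointwise negation. -/
def Bbin (h : X → Fin 2) : Finset (X → Fin 2) := {h, fun x => 1 - h x}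

theorem Bbin_nonempty (h : X → Fin 2) : (Bbin h).Nonempty :=
  ⟨h, by simp [Bbin]⟩

/-!
Over `{h, 1 - h}` the randomized ERM returns `h` when `h` errs on fewer than half of the sample,
`1 - h` when it errs on more, and either one with probability `1/2` on a tie. So with
`p = Err_D(h)` and `K ~ Bin(n, p)` the number of sample errors of `h`, `LG_n(h) = E[W_n(K)]`, where
`W_n(k)` is `p`, `1 - p` or `1/2`. Splitting off the last sample point,
`E_{n+1}[f] = E_n[(1 - p) f(K) + p f(K + 1)]`, and comparing `W_n` with this one-step average of
`W_{n+1}`: for even `n` the difference vanishes except at a tie, where it is `(2p - 1)^2 / 2 ≥ 0`;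
for odd `n = 2t + 1` it is supported on `K ∈ {t, t + 1}`, and the two contributions cancel because
`P(K = t) p = P(K = t + 1) (1 - p)`.
-/

def binomialWeight (p : ℝ) (n k : ℕ) : ℝ := n.choose k * p ^ k * (1 - p) ^ (n - k)

def binomialExpect (p : ℝ) (n : ℕ) (f : ℕ → ℝ) : ℝ :=
  ∑ k ∈ range (n + 1), binomialWeight p n k * f k

lemma binomialWeight_of_lt {p : ℝ} {n k : ℕ} (h : n < k) : binomialWeight p n k = 0 := by
  simp [binomialWeight, Nat.choose_eq_zero_of_lt h]

lemma binomialWeight_nonneg {p : ℝ} (hp0 : 0 ≤ p) (hp1 : p ≤ 1) (n k : ℕ) :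
    0 ≤ binomialWeight p n k := by
  have : 0 ≤ 1 - p := sub_nonneg.2 hp1
  unfold binomialWeight
  positivity

lemma binomialWeight_succ_zero (p : ℝ) (n : ℕ) :
    binomialWeight p (n + 1) 0 = (1 - p) * binomialWeight p n 0 := by
  simp [binomialWeight, pow_succ, mul_comm]

lemma binomialWeight_succ_succ (p : ℝ) (n k : ℕ) :
    binomialWeight p (n + 1) (k + 1) =
      (1 - p) * binomialWeight p n (k + 1) + p * binomialWeight p n k := by
  have hshift : (n.choose (k + 1) : ℝ) * (1 - p) ^ (n - k) =
      (1 - p) * (n.choose (k + 1) * (1 - p) ^ (n - (k + 1))) := by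
    rcases le_or_gt (k + 1) n with hkn | hnk
    · rw [show n - k = n - (k + 1) + 1 by omega, pow_succ]; ring
    · simp [Nat.choose_eq_zero_of_lt hnk]
  unfold binomialWeight
  rw [Nat.choose_succ_succ', Nat.add_sub_add_right]
  push_cast
  linear_combination p ^ (k + 1) * hshift

theorem binomialExpect_succ (p : ℝ) (n : ℕ) (f : ℕ → ℝ) :
    binomialExpect p (n + 1) f = binomialExpect p n fun k => (1 - p) * f k + p * f (k + 1) := by
  have hlast : binomialWeight p n (n + 1) = 0 := binomialWeight_of_lt n.lt_succ_self
  simp only [binomialExpect, sum_range_succ' _ (n + 1), binomialWeight_succ_succ,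
    binomialWeight_succ_zero, add_mul, sum_add_distrib, mul_add]
  rw [sum_range_succ (fun k => (1 - p) * binomialWeight p n (k + 1) * f (k + 1)), hlast,
    sum_range_succ' (fun k => binomialWeight p n k * ((1 - p) * f k))]
  simp only [zero_mul, mul_assoc, mul_left_comm (1 - p), mul_left_comm p]
  ring

/-- The expected loss of the randomized ERM over `{h, 1 - h}` when `Err_D(h) = p` and `h` errs on
`k` of the `n` sample points. -/
def majorityLoss (p : ℝ) (n k : ℕ) : ℝ :=
  if 2 * k < n then p else if n < 2 * k then 1 - p else 1 / 2

lemma majorityLoss_sub_step (p : ℝ) (n k : ℕ) :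
    majorityLoss p n k -
        ((1 - p) * majorityLoss p (n + 1) k + p * majorityLoss p (n + 1) (k + 1)) =
      if n = 2 * k then (2 * p - 1) ^ 2 / 2
      else if n = 2 * k + 1 then p * (2 * p - 1) / 2
      else if n + 1 = 2 * k then -((1 - p) * (2 * p - 1) / 2) else 0 := by
  unfold majorityLoss
  split_ifs <;> first | omega | ring

lemma binomialWeight_mul_eq_of_odd (p : ℝ) (t : ℕ) :
    binomialWeight p (2 * t + 1) t * p = binomialWeight p (2 * t + 1) (t + 1) * (1 - p) := by
  have hchoose : (2 * t + 1).choose (t + 1) = (2 * t + 1).choose t := by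
    rw [← Nat.choose_symm (by omega), show 2 * t + 1 - (t + 1) = t by omega]
  simp only [binomialWeight, hchoose, show 2 * t + 1 - t = t + 1 by omega,
    show 2 * t + 1 - (t + 1) = t by omega, pow_succ]
  ring

theorem binomialExpect_majorityLoss_succ_le {p : ℝ} (hp0 : 0 ≤ p) (hp1 : p ≤ 1) (n : ℕ) :
    binomialExpect p (n + 1) (majorityLoss p (n + 1)) ≤
      binomialExpect p n (majorityLoss p n) := by
  rw [binomialExpect_succ, binomialExpect, binomialExpect, ← sub_nonneg, ← sum_sub_distrib]
  simp only [← mul_sub, majorityLoss_sub_step]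
  rcases n.even_or_odd' with ⟨t, rfl | rfl⟩
  · refine sum_nonneg fun k _ => mul_nonneg (binomialWeight_nonneg hp0 hp1 _ _) ?_
    split_ifs <;> first | omega | positivity
  · rw [sum_eq_add_of_mem t (t + 1) (by simp; omega) (by simp; omega) (by omega)]
    · rw [if_neg (by omega), if_pos rfl, if_neg (by omega), if_neg (by omega), if_pos (by omega)]
      exact le_of_eq (by linear_combination -(2 * p - 1) / 2 * binomialWeight_mul_eq_of_odd p t)
    · intro k _ hk
      rw [if_neg (by omega), if_neg (by omega), if_neg (by omega), mul_zero]

section Sampling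

variable {Ω : Type*} {q : Ω → Prop} [DecidablePred q]

lemma setOf_filter_eq_eq_pi {n : ℕ} (s : Finset (Fin n)) :
    {S : Fin n → Ω | ({i | q (S i)} : Finset (Fin n)) = s} =
      Set.univ.pi fun i => if i ∈ s then {z | q z} else {z | q z}ᶜ := by
  ext S
  simp only [Set.mem_ofPred_eq, Set.mem_pi, Set.mem_univ, true_implies, Finset.ext_iff,
    mem_filter, mem_univ, true_and]
  refine forall_congr' fun i => ?_
  split_ifs with hi <;> simp [hi]

variable [MeasurableSpace Ω] (μ : Measure Ω) [IsProbabilityMeasure μ]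

lemma measurableSet_setOf_filter_eq {n : ℕ} (hq : MeasurableSet {z | q z})
    (s : Finset (Fin n)) :
    MeasurableSet {S : Fin n → Ω | ({i | q (S i)} : Finset (Fin n)) = s} := by
  rw [setOf_filter_eq_eq_pi]
  exact .univ_pi fun i => by split_ifs; exacts [hq, hq.compl]

lemma pi_real_setOf_filter_eq {n : ℕ} (hq : MeasurableSet {z | q z}) (s : Finset (Fin n)) :
    (Measure.pi fun _ : Fin n => μ).real {S | ({i | q (S i)} : Finset (Fin n)) = s} =
      μ.real {z | q z} ^ #s * (1 - μ.real {z | q z}) ^ (n - #s) := by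
  rw [setOf_filter_eq_eq_pi, measureReal_def, Measure.pi_pi, ENNReal.toReal_prod]
  simp only [← measureReal_def, apply_ite μ.real, probReal_compl_eq_one_sub hq]
  rw [prod_ite, prod_const, prod_const, filter_mem_eq_inter, univ_inter, filter_not,
    filter_mem_eq_inter, univ_inter, ← compl_eq_univ_sdiff, card_compl, Fintype.card_fin]

theorem integral_comp_card_filter (hq : MeasurableSet {z | q z}) (n : ℕ) (F : ℕ → ℝ) :
    ∫ S, F #{i | q (S i)} ∂(Measure.pi fun _ : Fin n => μ) =
      binomialExpect (μ.real {z | q z}) n F := by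
  have hsplit (S : Fin n → Ω) : F #{i | q (S i)} = ∑ s : Finset (Fin n),
      {S : Fin n → Ω | ({i | q (S i)} : Finset (Fin n)) = s}.indicator (fun _ => F #s) S := by
    simp [Set.indicator_apply]
  have hmeas := measurableSet_setOf_filter_eq (n := n) hq
  simp_rw [hsplit]
  rw [integral_finsetSum _ fun s _ => (integrable_const _).indicator (hmeas s)]
  simp only [integral_indicator_const _ (hmeas _), pi_real_setOf_filter_eq μ hq, smul_eq_mul]
  rw [← powerset_univ, sum_powerset_apply_card
    (fun k => μ.real {z | q z} ^ k * (1 - μ.real {z | q z}) ^ (n - k) * F k),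
    card_univ, Fintype.card_fin, binomialExpect]
  simp only [nsmul_eq_mul, binomialWeight, mul_assoc]

end Sampling

lemma pmfExp_uniformOfFinset {H : Type*} (t : Finset H) (ht : t.Nonempty) (φ : H → ℝ) :
    pmfExp (PMF.uniformOfFinset t ht) φ = (∑ f ∈ t, φ f) / #t := by
  rw [pmfExp, tsum_eq_sum (s := t) fun f hf => by simp [PMF.uniformOfFinset_apply, hf], sum_div]
  refine sum_congr rfl fun f hf => ?_
  rw [PMF.uniformOfFinset_apply, if_pos hf, ENNReal.toReal_inv, ENNReal.toReal_natCast,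
    inv_mul_eq_div]

open scoped Classical in
lemma ermSet_pair {n : ℕ} {f g : X → Fin k} (hfg : f ≠ g) (S : Fin n → X × Fin k) :
    ermSet {f, g} S =
      if errS S f < errS S g then {f} else if errS S g < errS S f then {g} else {f, g} := by
  ext f'
  simp only [ermSet, mem_filter, mem_insert, mem_singleton, forall_eq_or_imp, forall_eq]
  split_ifs <;> grind

lemma fin_two_one_sub_ne_iff : ∀ a b : Fin 2, 1 - a ≠ b ↔ a = b := by decide

lemma ne_one_sub [Nonempty X] (h : X → Fin 2) : h ≠ fun x => 1 - h x := by
  obtain ⟨x⟩ := ‹Nonempty X›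
  intro heq
  exact (fin_two_one_sub_ne_iff (h x) (h x)).2 rfl (congrFun heq x).symm

lemma measurableSet_errSet {h : X → Fin 2} (hmeas : Measurable h) :
    MeasurableSet {z : X × Fin 2 | h z.1 ≠ z.2} :=
  (measurableSet_eq_fun (hmeas.comp measurable_fst) measurable_snd).compl

lemma errD_one_sub (D : Measure (X × Fin 2)) [IsProbabilityMeasure D] {h : X → Fin 2}
    (hmeas : Measurable h) : errD D (fun x => 1 - h x) = 1 - errD D h := by
  have hcompl : {z : X × Fin 2 | 1 - h z.1 ≠ z.2} = {z | h z.1 ≠ z.2}ᶜ := by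
    ext z
    simp [fin_two_one_sub_ne_iff]
  simp only [errD, hcompl, ← measureReal_def,
    probReal_compl_eq_one_sub (measurableSet_errSet hmeas)]

lemma errS_one_sub {n : ℕ} (h : X → Fin 2) (S : Fin n → X × Fin 2) :
    errS S (fun x => 1 - h x) = (n - #{i | h (S i).1 ≠ (S i).2}) / n := by
  have hcompl : ({i | 1 - h (S i).1 ≠ (S i).2} : Finset (Fin n)) =
      ({i | h (S i).1 ≠ (S i).2} : Finset (Fin n))ᶜ := by
    ext i
    simp [fin_two_one_sub_ne_iff]
  rw [errS, hcompl, card_compl, Fintype.card_fin,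
    Nat.cast_sub ((card_filter_le _ _).trans_eq (card_fin n))]

lemma natCast_div_lt_sub_div_iff {c n : ℕ} : (c : ℝ) / n < (n - c) / n ↔ 2 * c < n := by
  rcases n.eq_zero_or_pos with rfl | hn
  · simp
  rw [div_lt_div_iff_of_pos_right (by positivity), ← Nat.cast_lt (α := ℝ)]
  push_cast
  constructor <;> intro <;> linarith

lemma natCast_sub_div_lt_div_iff {c n : ℕ} (hc : c ≤ n) :
    ((n : ℝ) - c) / n < c / n ↔ n < 2 * c := by
  rcases n.eq_zero_or_pos with rfl | hn
  · simp [Nat.le_zero.1 hc]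
  rw [div_lt_div_iff_of_pos_right (by positivity), ← Nat.cast_lt (α := ℝ)]
  push_cast
  constructor <;> intro <;> linarith

open scoped Classical in
lemma pmfExp_ermPMF_Bbin [Nonempty X] (D : Measure (X × Fin 2)) [IsProbabilityMeasure D]
    {h : X → Fin 2} (hmeas : Measurable h) {n : ℕ} (S : Fin n → X × Fin 2) :
    pmfExp (ermPMF (Bbin h) (Bbin_nonempty h) S) (errD D) =
      majorityLoss (errD D h) n #{i | h (S i).1 ≠ (S i).2} := by
  have hc : #{i | h (S i).1 ≠ (S i).2} ≤ n := (card_filter_le _ _).trans_eq (card_fin n)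
  rw [ermPMF, pmfExp_uniformOfFinset, Bbin, ermSet_pair (ne_one_sub h), errS_one_sub,
    show errS S h = #{i | h (S i).1 ≠ (S i).2} / n from rfl]
  simp only [natCast_div_lt_sub_div_iff, natCast_sub_div_lt_div_iff hc, majorityLoss]
  split_ifs
  · simp
  · simp [errD_one_sub D hmeas]
  · rw [sum_pair (ne_one_sub h), card_pair (ne_one_sub h), errD_one_sub D hmeas]
    ring

theorem LG_Bbin_eq [Nonempty X] (D : Measure (X × Fin 2)) [IsProbabilityMeasure D]
    {h : X → Fin 2} (hmeas : Measurable h) (n : ℕ) :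
    LG D (Bbin h) (Bbin_nonempty h) n =
      binomialExpect (errD D h) n (majorityLoss (errD D h) n) := by
  simp only [LG, pmfExp_ermPMF_Bbin D hmeas]
  exact integral_comp_card_filter D (measurableSet_errSet hmeas) n _

/-- **The randomized ERM over `{h, 1 - h}` is monotone** (Lemma 3.2).  In binary
classification, for every distribution `D` on `X × {0,1}`, every (measurable) hypothesis
`h` and all `n ≤ m`: `LG_m(h) ≤ LG_n(h)`. -/
theorem binary_randomized_ERM_monotone
    (D : Measure (X × Fin 2)) [IsProbabilityMeasure D]
    (h : X → Fin 2) (hmeas : Measurable h)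
    (n m : ℕ) (hnm : n ≤ m) :
    LG D (Bbin h) (Bbin_nonempty h) m ≤ LG D (Bbin h) (Bbin_nonempty h) n := by
  have : Nonempty X := (nonempty_of_isProbabilityMeasure D).map Prod.fst
  have hp0 : 0 ≤ errD D h := measureReal_nonneg
  have hp1 : errD D h ≤ 1 := measureReal_le_one
  have hanti : Antitone (LG D (Bbin h) (Bbin_nonempty h)) := antitone_nat_of_succ_le fun n => by
    simpa only [LG_Bbin_eq D hmeas] using binomialExpect_majorityLoss_succ_le hp0 hp1 n
  exact hanti hnm

end
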